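/- arXiv:2103.01356 — 4 statements merged into one kernel-verified Lean document; each statement's English description precedes it below -/
import Mathlib

section
/- The variance of the Monte-Carlo cross-validation intensity estimator is Var(θ̂) = (p/(k(1−p))) · (Σ_{x∈𝐱} h(x)²) / H²; in particular it tends to 0 as k → ∞ or as p → 0. -/
/-!
The estimator is the linear combination `∑_{i,x} h x / (k (1 - p) H) · ε_{i,x}` of `k · |𝐱|`
independent Bernoulli(1 - p) variables, so its variance is
`∑_{i,x} (h x / (k (1 - p) H))² · p (1 - p)`, and summing over the `k` rounds gives the formula.
-/

open MeasureTheory ProbabilityTheory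

namespace ProbabilityTheory

variable {Ω : Type*} {mΩ : MeasurableSpace Ω} {μ : Measure Ω}

lemma eq_indicator_one_of_forall_eq_zero_or_eq_one {X : Ω → ℝ}
    (h01 : ∀ ω, X ω = 0 ∨ X ω = 1) : X = {ω | X ω = 1}.indicator 1 := by
  funext ω
  rcases h01 ω with h | h <;> simp [Set.indicator, h]

lemma variance_indicator_one [IsProbabilityMeasure μ] {s : Set Ω} (hs : MeasurableSet s) :
    Var[s.indicator 1; μ] = μ.real s * (1 - μ.real s) := by
  have hsq : s.indicator (1 : Ω → ℝ) ^ 2 = s.indicator 1 := by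
    funext ω
    by_cases hω : ω ∈ s <;> simp [hω]
  have hmemLp : MemLp (s.indicator (1 : Ω → ℝ)) 2 μ := (memLp_const 1).indicator hs
  rw [variance_eq_sub hmemLp, hsq, integral_indicator_one hs]
  ring

lemma iIndepFun.variance_sum_const_mul {ι : Type*} [Fintype ι] {X : ι → Ω → ℝ}
    (hX : ∀ i, MemLp (X i) 2 μ) (hindep : iIndepFun X μ) (a : ι → ℝ) :
    Var[fun ω ↦ ∑ i, a i * X i ω; μ] = ∑ i, a i ^ 2 * Var[X i; μ] := by
  have hsum : (fun ω ↦ ∑ i, a i * X i ω) = ∑ i, a i • X i := by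
    funext ω
    simp [Finset.sum_apply]
  rw [hsum, IndepFun.variance_sum (fun i _ ↦ (hX i).const_smul (a i))]
  · simp only [variance_smul]
  · intro i _ j _ hij
    exact (hindep.indepFun hij).comp (measurable_const_smul (a i)) (measurable_const_smul (a j))

end ProbabilityTheory

theorem mccv_intensity_estimator_variance_general {Ω : Type*} [MeasurableSpace Ω]
    (P : Measure Ω) [IsProbabilityMeasure P] {S : Type*} (xs : Finset S)
    (h : S → ℝ) (H : ℝ) (p : ℝ) (hp : p ∈ Set.Ioo (0 : ℝ) 1)
    (k : ℕ) (ε : Fin k × xs → Ω → ℝ)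
    (hmeas : ∀ q, Measurable (ε q))
    (h01 : ∀ q ω, ε q ω = 0 ∨ ε q ω = 1)
    (hindep : iIndepFun ε P)
    (hprob : ∀ q, P {ω | ε q ω = 1} = ENNReal.ofReal (1 - p)) :
    variance (fun ω => (1 / (k : ℝ)) * ∑ i : Fin k,
        (∑ x : xs, h x * ε (i, x) ω) / ((1 - p) * H)) P
      = (p / (k * (1 - p))) * (∑ x ∈ xs, (h x) ^ 2) / H ^ 2 := by
  have hindicator q := eq_indicator_one_of_forall_eq_zero_or_eq_one (h01 q)
  have hset q : MeasurableSet {ω | ε q ω = 1} := hmeas q (measurableSet_singleton 1)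
  have hmemLp q : MemLp (ε q) 2 P := by
    rw [hindicator q]
    exact (memLp_const 1).indicator (hset q)
  have hvar q : Var[ε q; P] = (1 - p) * p := by
    rw [hindicator q, variance_indicator_one (hset q), measureReal_def, hprob q,
      ENNReal.toReal_ofReal (by linarith [hp.2])]
    ring
  have hestimator : (fun ω => (1 / (k : ℝ)) * ∑ i : Fin k,
      (∑ x : xs, h x * ε (i, x) ω) / ((1 - p) * H))
      = fun ω ↦ ∑ q : Fin k × xs, h q.2 / (k * ((1 - p) * H)) * ε q ω := by
    funext ω
    simp only [Fintype.sum_prod_type, Finset.mul_sum, Finset.sum_div]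
    congr! 2
    rw [div_mul_eq_div_div _ (k : ℝ)]
    ring
  have hcount : ∑ q : Fin k × xs, h q.2 ^ 2 = k * ∑ x ∈ xs, h x ^ 2 := by
    simp [Fintype.sum_prod_type, Finset.sum_attach xs (fun x ↦ h x ^ 2)]
  -- `a / (a * a) = a⁻¹` holds also for `a = 0`, since `0⁻¹ = 0`.
  have hcancel := div_self_mul_self' ((k : ℝ) * (1 - p))
  rw [hestimator, hindep.variance_sum_const_mul hmemLp]
  simp only [hvar, div_pow, ← Finset.sum_mul, ← Finset.sum_div, hcount]
  -- otherwise `ring` expands `1 - p` inside the inverses and loses their product structure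
  generalize 1 - p = q at hcancel ⊢
  linear_combination (∑ x ∈ xs, h x ^ 2) * p / H ^ 2 * hcancel

/-- The variance of the Monte-Carlo cross-validation intensity estimator is
`Var(θ̂) = (p/(k(1−p))) · (∑_{x∈xs} h(x)²) / H²`. -/
theorem mccv_intensity_estimator_variance {Ω : Type*} [MeasurableSpace Ω]
    (P : Measure Ω) [IsProbabilityMeasure P] {S : Type*} (xs : Finset S)
    (h : S → ℝ) (H : ℝ) (hH : H ≠ 0) (p : ℝ) (hp : p ∈ Set.Ioo (0 : ℝ) 1)
    (k : ℕ) (hk : 1 ≤ k) (ε : Fin k × xs → Ω → ℝ)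
    (hmeas : ∀ q, Measurable (ε q))
    (h01 : ∀ q ω, ε q ω = 0 ∨ ε q ω = 1)
    (hindep : iIndepFun ε P)
    (hprob : ∀ q, P {ω | ε q ω = 1} = ENNReal.ofReal (1 - p)) :
    variance (fun ω => (1 / (k : ℝ)) * ∑ i : Fin k,
        (∑ x : xs, h x * ε (i, x) ω) / ((1 - p) * H)) P
      = (p / (k * (1 - p))) * (∑ x ∈ xs, (h x) ^ 2) / H ^ 2 :=
  mccv_intensity_estimator_variance_general P xs h H p hp k ε hmeas h01 hindep hprob
end

section
/- Prediction (swap) formula for independent thinning of a finite sample: let (X_1,…,X_N) be a random vector in S^N, let U_1,…,U_N be i.i.d. uniform random variables on [0,1] independent of (X_1,…,X_N), let p : S → [0,1] be measurable, and set B_i := 1{U_i ≤ p(X_i)}. Fix 1 ≤ n ≤ N and an injective map φ : {1,…,n} → {1,…,N}, and let G : S^N × {0,1}^N → [0,∞) be measurable and insensitive to the mark coordinates in the range of φ, i.e. G(x, b) = G(x, b′) whenever b_j = b′_j for every index j not in the range of φ. Then E[ ( ∏_{j=1}^n B_{φ(j)} ) · ( ∏_{j=1}^n (1 − p(X_{φ(j)}))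 ) · G(X, B) ] = E[ ( ∏_{j=1}^n (1 − B_{φ(j)}) ) · ( ∏_{j=1}^n p(X_{φ(j)}) ) · G(X, B) ]. -/
/-!
Since the marks are independent of `X`, it suffices to compare the two integrals over the marks
for a fixed value `x` of `X`, where the marks are i.i.d. uniform on `[0, 1]`. As `G` ignores the
marks indexed by the range of `φ`, integrating out those coordinates first factorizes each
integrand: `1{u ≤ a}` integrates to `a` and `1{u > a}` to `1 - a`. So both sides become
`∏ j, p (x (φ j)) * (1 - p (x (φ j)))` times the same integral over the remaining coordinates.
-/

open MeasureTheory ProbabilityTheory ENNReal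

open Finset Function

theorem lmarginal_prod_mul_of_update_eq {ι : Type*} [DecidableEq ι] {X : ι → Type*}
    [∀ i, MeasurableSpace (X i)] (μ : ∀ i, Measure (X i)) [∀ i, SigmaFinite (μ i)]
    (f : ∀ i, X i → ℝ≥0∞) (hf : ∀ i, Measurable (f i)) (s : Finset ι) {g : (∀ i, X i) → ℝ≥0∞} (hg : Measurable g)
    (hgs : ∀ x, ∀ i ∈ s, ∀ t, g (update x i t) = g x) :
    ∫⋯∫⁻_s, (fun x => (∏ i ∈ s, f i (x i)) * g x) ∂μ
      = fun x => (∏ i ∈ s, ∫⁻ t, f i t ∂μ i) * g x := by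
  induction s using Finset.induction_on generalizing g with
  | empty => simp
  | @insert a s ha ih =>
    have hF : Measurable fun x : ∀ i, X i => (∏ i ∈ insert a s, f i (x i)) * g x :=
      (Finset.measurable_prod _ fun i _ => (hf i).comp (measurable_pi_apply i)).mul hg
    have hslice : ∀ x, ∫⁻ t, (∏ i ∈ insert a s, f i (update x a t i)) * g (update x a t) ∂μ a
        = (∏ i ∈ s, f i (x i)) * (g x * ∫⁻ t, f a t ∂μ a) := fun x => by
      have hs : ∀ t, ∏ i ∈ s, f i (update x a t i) = ∏ i ∈ s, f i (x i) := fun t =>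
        prod_congr rfl fun i hi => by rw [update_of_ne (ne_of_mem_of_not_mem hi ha)]
      simp_rw [prod_insert ha, update_self, hs, hgs x a (mem_insert_self a s)]
      rw [← mul_assoc, ← lintegral_const_mul _ (hf a)]
      exact lintegral_congr fun t => by ring
    rw [lmarginal_insert' _ hF ha, funext hslice,
      ih (g := fun x => g x * ∫⁻ t, f a t ∂μ a) (hg.mul measurable_const) fun x i hi t => by
        rw [hgs x i (mem_insert_of_mem hi)]]
    ext x
    rw [prod_insert ha]; ring

theorem lintegral_ite_le_uniform {a : ℝ} (ha : a ∈ Set.Icc (0 : ℝ) 1) :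
    ∫⁻ t, (if t ≤ a then (1 : ℝ≥0∞) else 0) ∂volume.restrict (Set.Icc (0 : ℝ) 1)
      = ENNReal.ofReal a := by
  have hind : (fun t : ℝ => if t ≤ a then (1 : ℝ≥0∞) else 0) = (Set.Iic a).indicator 1 := by
    ext t; simp [Set.indicator_apply]
  have hset : Set.Iic a ∩ Set.Icc 0 1 = Set.Icc 0 a := by
    ext t; simp only [Set.mem_inter_iff, Set.mem_Iic, Set.mem_Icc]; grind
  rw [hind, lintegral_indicator_one measurableSet_Iic, Measure.restrict_apply measurableSet_Iic,
    hset, Real.volume_Icc, sub_zero]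

theorem lintegral_ite_gt_uniform {a : ℝ} (ha : a ∈ Set.Icc (0 : ℝ) 1) :
    ∫⁻ t, (if t ≤ a then (0 : ℝ≥0∞) else 1) ∂volume.restrict (Set.Icc (0 : ℝ) 1)
      = ENNReal.ofReal (1 - a) := by
  have hind : (fun t : ℝ => if t ≤ a then (0 : ℝ≥0∞) else 1) = (Set.Ioi a).indicator 1 := by
    ext t; by_cases h : t ≤ a <;> simp [Set.indicator_apply, h]
  have hset : Set.Ioi a ∩ Set.Icc 0 1 = Set.Ioc a 1 := by
    ext t; simp only [Set.mem_inter_iff, Set.mem_Ioi, Set.mem_Icc, Set.mem_Ioc]; grind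
  rw [hind, lintegral_indicator_one measurableSet_Ioi, Measure.restrict_apply measurableSet_Ioi,
    hset, Real.volume_Ioc]

theorem lintegral_pi_uniform_thinning_swap {ι : Type*} [Fintype ι] [DecidableEq ι]
    (s : Finset ι) {a : ι → ℝ} (ha : ∀ i, a i ∈ Set.Icc (0 : ℝ) 1)
    {g : (ι → ℝ) → ℝ≥0∞} (hg : Measurable g) (hgs : ∀ u, ∀ i ∈ s, ∀ t, g (update u i t) = g u) :
    ∫⁻ u, (∏ i ∈ s, if u i ≤ a i then (1 : ℝ≥0∞) else 0) * (∏ i ∈ s, ENNReal.ofReal (1 - a i))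
        * g u ∂(Measure.pi fun _ => volume.restrict (Set.Icc (0 : ℝ) 1))
      = ∫⁻ u, (∏ i ∈ s, if u i ≤ a i then (0 : ℝ≥0∞) else 1) * (∏ i ∈ s, ENNReal.ofReal (a i))
        * g u ∂(Measure.pi fun _ => volume.restrict (Set.Icc (0 : ℝ) 1)) := by
  have hite (c d : ℝ≥0∞) (i : ι) : Measurable fun t : ℝ => if t ≤ a i then c else d :=
    Measurable.ite measurableSet_Iic measurable_const measurable_const
  have hF (c d b : ℝ≥0∞) :
      Measurable fun u : ι → ℝ => (∏ i ∈ s, if u i ≤ a i then c else d) * (b * g u) :=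
    (Finset.measurable_prod _ fun i _ => (hite c d i).comp (measurable_pi_apply i)).mul
      (hg.const_mul b)
  have hmarg (c d b : ℝ≥0∞) :=
    lmarginal_prod_mul_of_update_eq (fun _ => volume.restrict (Set.Icc (0 : ℝ) 1))
      (fun i t => if t ≤ a i then c else d) (hite c d) s (hg.const_mul b)
      fun u i hi t => by rw [hgs u i hi]
  simp_rw [mul_assoc]
  refine lintegral_eq_of_lmarginal_eq s (hF 1 0 _) (hF 0 1 _) ?_
  rw [hmarg, hmarg]
  ext u
  simp_rw [lintegral_ite_le_uniform (ha _), lintegral_ite_gt_uniform (ha _)]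
  ring

theorem ProbabilityTheory.IndepFun.lintegral_comp_eq_lintegral_lintegral {Ω α β : Type*}
    [MeasurableSpace Ω] [MeasurableSpace α] [MeasurableSpace β] {P : Measure Ω} [IsFiniteMeasure P]
    {X : Ω → α} {Y : Ω → β} (hXY : IndepFun X Y P) (hX : AEMeasurable X P)
    (hY : AEMeasurable Y P) {Φ : α × β → ℝ≥0∞} (hΦ : Measurable Φ) :
    ∫⁻ ω, Φ (X ω, Y ω) ∂P = ∫⁻ x, ∫⁻ y, Φ (x, y) ∂P.map Y ∂P.map X := by
  rw [← lintegral_map' hΦ.aemeasurable (hX.prodMk hY),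
    hXY.map_prod_eq_prod_map_map hX hY, lintegral_prod _ hΦ.aemeasurable]

theorem Measurable.decide_le {α : Type*} [MeasurableSpace α] {f g : α → ℝ} (hf : Measurable f)
    (hg : Measurable g) : Measurable fun a => decide (f a ≤ g a) :=
  measurable_to_bool <| by
    simpa only [Set.preimage, Set.mem_singleton_iff, decide_eq_true_eq] using measurableSet_le hf hg

theorem lintegral_pi_uniform_thinning_swap_marks {κ ι : Type*} [Fintype κ] [Fintype ι]
    (φ : κ ↪ ι) {a : ι → ℝ} (ha : ∀ i, a i ∈ Set.Icc (0 : ℝ) 1) {g : (ι → Bool) → ℝ≥0∞}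
    (hg : ∀ b b', (∀ i, i ∉ Set.range φ → b i = b' i) → g b = g b') :
    ∫⁻ u, (∏ j, if u (φ j) ≤ a (φ j) then (1 : ℝ≥0∞) else 0) * (∏ j, ENNReal.ofReal (1 - a (φ j)))
        * g (fun i => decide (u i ≤ a i)) ∂(Measure.pi fun _ => volume.restrict (Set.Icc (0 : ℝ) 1))
      = ∫⁻ u, (∏ j, if u (φ j) ≤ a (φ j) then (0 : ℝ≥0∞) else 1) * (∏ j, ENNReal.ofReal (a (φ j)))
        * g (fun i => decide (u i ≤ a i))
          ∂(Measure.pi fun _ => volume.restrict (Set.Icc (0 : ℝ) 1)) := by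
  classical
  have hmarks : Measurable fun u : ι → ℝ => g fun i => decide (u i ≤ a i) :=
    (measurable_of_countable g).comp
      (measurable_pi_lambda _ fun i => (measurable_pi_apply i).decide_le measurable_const)
  have hupdate (u : ι → ℝ) (i : ι) (hi : i ∈ univ.map φ) (t : ℝ) :
      g (fun k => decide (update u i t k ≤ a k)) = g fun k => decide (u k ≤ a k) := by
    obtain ⟨j, -, rfl⟩ := Finset.mem_map.1 hi
    refine hg _ _ fun k hk => ?_
    rw [update_of_ne (by rintro rfl; exact hk ⟨j, rfl⟩)]
  simpa only [Finset.prod_map] using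
    lintegral_pi_uniform_thinning_swap (univ.map φ) ha hmarks hupdate

theorem thinning_prediction_swap_formula_general {Ω S : Type*} [MeasurableSpace Ω]
    [MeasurableSpace S] (P : Measure Ω) [IsProbabilityMeasure P]
    (N n : ℕ)
    (X : Ω → Fin N → S) (hX : Measurable X)
    (U : Fin N → Ω → ℝ) (hU : ∀ i, Measurable (U i))
    (hUiid : iIndepFun U P)
    (hUlaw : ∀ i, Measure.map (U i) P = volume.restrict (Set.Icc (0 : ℝ) 1))
    (hXUindep : IndepFun X (fun ω (i : Fin N) => U i ω) P)
    (p : S → ℝ) (hp : Measurable p) (hp01 : ∀ u, p u ∈ Set.Icc (0 : ℝ) 1)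
    (φ : Fin n ↪ Fin N)
    (G : (Fin N → S) → (Fin N → Bool) → ℝ≥0∞)
    (hG : Measurable (fun q : (Fin N → S) × (Fin N → Bool) => G q.1 q.2))
    (hGins : ∀ x b b', (∀ j, j ∉ Set.range φ → b j = b' j) → G x b = G x b') :
    ∫⁻ ω, (∏ j, (if U (φ j) ω ≤ p (X ω (φ j)) then (1 : ℝ≥0∞) else 0))
        * (∏ j, ENNReal.ofReal (1 - p (X ω (φ j))))
        * G (X ω) (fun i => decide (U i ω ≤ p (X ω i))) ∂P
      = ∫⁻ ω, (∏ j, (if U (φ j) ω ≤ p (X ω (φ j)) then (0 : ℝ≥0∞) else 1))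
        * (∏ j, ENNReal.ofReal (p (X ω (φ j))))
        * G (X ω) (fun i => decide (U i ω ≤ p (X ω i))) ∂P := by
  have hlawU : P.map (fun ω (i : Fin N) => U i ω)
      = Measure.pi fun _ => volume.restrict (Set.Icc (0 : ℝ) 1) := by
    rw [hUiid.map_fun_eq_pi_map fun i => (hU i).aemeasurable]
    exact congrArg Measure.pi (funext hUlaw)
  -- the two sides are `∫⁻ Φ 1 0 (1 - ·) (X, U) ∂P` and `∫⁻ Φ 0 1 id (X, U) ∂P`
  let Φ (c d : ℝ≥0∞) (w : ℝ → ℝ) (q : (Fin N → S) × (Fin N → ℝ)) : ℝ≥0∞ :=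
    (∏ j, if q.2 (φ j) ≤ p (q.1 (φ j)) then c else d) * (∏ j, ENNReal.ofReal (w (p (q.1 (φ j)))))
      * G q.1 fun i => decide (q.2 i ≤ p (q.1 i))
  have hΦ (c d : ℝ≥0∞) {w : ℝ → ℝ} (hw : Measurable w) : Measurable (Φ c d w) := by
    have hmarks : Measurable fun q : (Fin N → S) × (Fin N → ℝ) => G q.1 fun i =>
        decide (q.2 i ≤ p (q.1 i)) :=
      hG.comp (measurable_fst.prodMk
        (measurable_pi_lambda _ fun i => Measurable.decide_le (by fun_prop) (by fun_prop)))
    refine (Measurable.mul ?_ (by fun_prop)).mul hmarks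
    exact Finset.measurable_prod _ fun j _ => Measurable.ite
      (measurableSet_le (by fun_prop) (by fun_prop)) measurable_const measurable_const
  have hiter (c d : ℝ≥0∞) {w : ℝ → ℝ} (hw : Measurable w) :=
    hXUindep.lintegral_comp_eq_lintegral_lintegral hX.aemeasurable
      (measurable_pi_lambda _ hU).aemeasurable (hΦ c d hw)
  calc _ = ∫⁻ x, ∫⁻ u, Φ 1 0 (1 - ·) (x, u) ∂P.map (fun ω i => U i ω) ∂P.map X :=
        hiter 1 0 (measurable_const.sub measurable_id)
    _ = ∫⁻ x, ∫⁻ u, Φ 0 1 id (x, u) ∂P.map (fun ω i => U i ω) ∂P.map X :=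
        lintegral_congr fun x => by
          rw [hlawU]
          exact lintegral_pi_uniform_thinning_swap_marks φ (fun i => hp01 (x i)) (hGins x)
    _ = _ := (hiter 0 1 measurable_id).symm

/-- Prediction (swap) formula for independent thinning of a finite sample:
with a random vector `X : Ω → (Fin N → S)`, i.i.d. uniform marks `U 1,…,U N` independent
of `X`, retention indicators `B i = 1{U i ≤ p(X i)}`, a fixed injective
`φ : Fin n ↪ Fin N`, and a non-negative measurable `G` that does not depend on the mark
coordinates in the range of `φ`,
`E[(∏_j B_{φ j})(∏_j (1 − p(X_{φ j}))) G(X,B)] = E[(∏_j (1 − B_{φ j}))(∏_j p(X_{φ j})) G(X,B)]`. -/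
theorem thinning_prediction_swap_formula {Ω S : Type*} [MeasurableSpace Ω]
    [MeasurableSpace S] (P : Measure Ω) [IsProbabilityMeasure P]
    (N n : ℕ) (hn : 1 ≤ n) (hnN : n ≤ N)
    (X : Ω → Fin N → S) (hX : Measurable X)
    (U : Fin N → Ω → ℝ) (hU : ∀ i, Measurable (U i))
    (hUiid : iIndepFun U P)
    (hUlaw : ∀ i, Measure.map (U i) P = volume.restrict (Set.Icc (0 : ℝ) 1))
    (hXUindep : IndepFun X (fun ω (i : Fin N) => U i ω) P)
    (p : S → ℝ) (hp : Measurable p) (hp01 : ∀ u, p u ∈ Set.Icc (0 : ℝ) 1)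
    (φ : Fin n ↪ Fin N)
    (G : (Fin N → S) → (Fin N → Bool) → ℝ≥0∞)
    (hG : Measurable (fun q : (Fin N → S) × (Fin N → Bool) => G q.1 q.2))
    (hGins : ∀ x b b', (∀ j, j ∉ Set.range φ → b j = b' j) → G x b = G x b') :
    ∫⁻ ω, (∏ j, (if U (φ j) ω ≤ p (X ω (φ j)) then (1 : ℝ≥0∞) else 0))
        * (∏ j, ENNReal.ofReal (1 - p (X ω (φ j))))
        * G (X ω) (fun i => decide (U i ω ≤ p (X ω i))) ∂P
      = ∫⁻ ω, (∏ j, (if U (φ j) ω ≤ p (X ω (φ j)) then (0 : ℝ≥0∞) else 1))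
        * (∏ j, ENNReal.ofReal (p (X ω (φ j))))
        * G (X ω) (fun i => decide (U i ω ≤ p (X ω i))) ∂P :=
  thinning_prediction_swap_formula_general P N n X hX U hU hUiid hUlaw hXUindep p hp hp01 φ G hG
    hGins
end

section
/- Second moment of a sum over distinct tuples of an i.i.d. sample: let X_1,…,X_N be i.i.d. S-valued random elements with distribution f·μ, let n ≥ 1 with 2n ≤ N, and let h : Sⁿ → [0,∞] be measurable and symmetric (invariant under permutation of its n arguments). Then E[ ( Σ_φ h(X_{φ(1)},…,X_{φ(n)}) )² ] = Σ_{j=0}^{n} j! · C(n,j)² · (N!/(N−(2n−j))!) · ∫_{S^{2n−j}} h(u_1,…,u_n) · h(u_1,…,u_j, u_{n+1},…,u_{2n−j}) · ∏_{i=1}^{2n−j} f(u_i) dμ^{2n−j}, where the sum over φ ranges over injective maps φ : {1,…,n} → {1,…,N} and C(n,j) denotes the binomial coefficient. -/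
open MeasureTheory ProbabilityTheory ENNReal

/-- Inclusion `Fin n → Fin (2n − j)` onto the first `n` coordinates (valid when `j ≤ n`),
used to express `h(u_1,…,u_n)` as a function of `(u_1,…,u_{2n−j})`. -/
def firstTupleIdx {n j : ℕ} (hj : j ≤ n) (i : Fin n) : Fin (2 * n - j) :=
  ⟨i, by have := i.isLt; omega⟩

/-- The index map `Fin n → Fin (2n − j)` sending `(1,…,n)` to `(1,…,j,n+1,…,2n−j)`
(0-based: `i ↦ i` for `i < j` and `i ↦ n + i − j` otherwise), used to express
`h(u_1,…,u_j,u_{n+1},…,u_{2n−j})` as a function of `(u_1,…,u_{2n−j})`. -/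
def overlapTupleIdx {n j : ℕ} (hj : j ≤ n) (i : Fin n) : Fin (2 * n - j) :=
  if h : (i : ℕ) < j then ⟨i, by have := i.isLt; omega⟩
  else ⟨n + i - j, by have := i.isLt; omega⟩

/-!
Expanding the square turns the second moment into a sum over ordered pairs `(φ, ψ)` of
injections. If exactly `j` entries of `ψ` lie in the range of `φ`, then after permuting the
arguments of both tuples (harmless, `h` being symmetric) the pair reads the sample along a single
injection `θ : Fin (2n - j) ↪ Fin N`, `φ` through the coordinates `(1, …, n)` and `ψ` through
`(1, …, j, n + 1, …, 2n - j)`. The `2n - j` variables `X ∘ θ` are i.i.d. with law `(f·μ)^{2n-j}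
= (∏ f)·μ^{2n-j}`, so the pair contributes the `j`-th integral. Finally there are
`N^(n) · C(n,j) · n^(j) · (N-n)^(n-j) = j! · C(n,j)² · N!/(N-(2n-j))!` pairs with overlap `j`,
where `N^(k)` is the falling factorial.
-/

open Finset

theorem lintegral_fin_nat_prod_eq_prod {n : ℕ} {E : Fin n → Type*}
    [∀ i, MeasurableSpace (E i)] (μ : ∀ i, Measure (E i)) [∀ i, SigmaFinite (μ i)]
    {f : ∀ i, E i → ℝ≥0∞} (hf : ∀ i, Measurable (f i)) :
    ∫⁻ x, ∏ i, f i (x i) ∂Measure.pi μ = ∏ i, ∫⁻ x, f i x ∂μ i := by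
  induction n with
  | zero => simp
  | succ n ih =>
    rw [(measurePreserving_piFinSuccAbove μ 0).symm.lintegral_map_equiv,
      Fin.prod_univ_succAbove _ 0, ← ih _ fun i ↦ hf (Fin.succAbove 0 i),
      ← lintegral_prod_mul (f := f 0)
        (g := fun y : ∀ j, E (Fin.succAbove 0 j) ↦ ∏ i, f (Fin.succAbove 0 i) (y i))
        (hf 0).aemeasurable
        (Finset.measurable_prod _ fun i _ ↦ (hf _).comp (measurable_pi_apply i)).aemeasurable]
    congr 1 with x
    rw [Fin.prod_univ_succAbove _ 0]
    simp only [MeasurableEquiv.piFinSuccAbove_symm_apply, Fin.insertNthEquiv, Equiv.coe_fn_mk,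
      Fin.insertNth_apply_same, Fin.insertNth_apply_succAbove]

theorem MeasureTheory.Measure.pi_fin_withDensity {n : ℕ} {E : Fin n → Type*}
    [∀ i, MeasurableSpace (E i)] {μ : ∀ i, Measure (E i)} [∀ i, SigmaFinite (μ i)]
    {f : ∀ i, E i → ℝ≥0∞} (hf : ∀ i, Measurable (f i))
    [∀ i, SigmaFinite ((μ i).withDensity (f i))] :
    Measure.pi (fun i ↦ (μ i).withDensity (f i))
      = (Measure.pi μ).withDensity fun x ↦ ∏ i, f i (x i) := by
  classical
  refine Measure.pi_eq fun s hs ↦ ?_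
  have hind : (Set.univ.pi s).indicator (fun x ↦ ∏ i, f i (x i))
      = fun x ↦ ∏ i, (s i).indicator (f i) (x i) := by
    ext x
    simp only [Set.indicator_apply, Set.mem_univ_pi, Fintype.prod_ite_zero]
    congr
  rw [withDensity_apply _ (.univ_pi hs), ← lintegral_indicator (.univ_pi hs), hind,
    lintegral_fin_nat_prod_eq_prod μ fun i ↦ (hf i).indicator (hs i)]
  simp_rw [lintegral_indicator (hs _), withDensity_apply _ (hs _)]

theorem lintegral_pi_withDensity {S : Type*} [MeasurableSpace S] {μ : Measure S} [SigmaFinite μ]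
    {f : S → ℝ≥0∞} (hf : Measurable f) [SigmaFinite (μ.withDensity f)] {m : ℕ}
    {G : (Fin m → S) → ℝ≥0∞} (hG : Measurable G) :
    ∫⁻ u, G u ∂Measure.pi (fun _ ↦ μ.withDensity f)
      = ∫⁻ u, G u * ∏ i, f (u i) ∂Measure.pi fun _ ↦ μ := by
  rw [Measure.pi_fin_withDensity (μ := fun _ ↦ μ) (f := fun _ ↦ f) fun _ ↦ hf,
    lintegral_withDensity_eq_lintegral_mul _ (by fun_prop) hG]
  simp_rw [Pi.mul_apply, mul_comm]

theorem lintegral_sum_sq {Ω ι : Type*} [MeasurableSpace Ω] {P : Measure Ω} [Fintype ι]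
    {F : ι → Ω → ℝ≥0∞} (hF : ∀ i, Measurable (F i)) :
    ∫⁻ ω, (∑ i, F i ω) ^ 2 ∂P = ∑ p : ι × ι, ∫⁻ ω, F p.1 ω * F p.2 ω ∂P := by
  simp_rw [sq, Finset.sum_mul_sum, ← Fintype.sum_prod_type']
  exact lintegral_finsetSum _ fun p _ ↦ (hF p.1).mul (hF p.2)

section IID
variable {Ω S ι κ : Type*} [MeasurableSpace Ω] [MeasurableSpace S] {P : Measure Ω}
  [IsProbabilityMeasure P] {ν : Measure S} {X : ι → Ω → S}

theorem map_comp_embedding_eq_pi [Fintype κ] (hX : ∀ i, Measurable (X i))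
    (hlaw : ∀ i, P.map (X i) = ν) (hindep : iIndepFun X P) (θ : κ ↪ ι) :
    P.map (fun ω k ↦ X (θ k) ω) = Measure.pi fun _ ↦ ν := by
  rw [(iIndepFun_iff_map_fun_eq_pi_map fun k ↦ (hX (θ k)).aemeasurable).mp
    (hindep.precomp θ.injective)]
  simp only [hlaw]

theorem lintegral_comp_embedding_eq [Fintype κ] (hX : ∀ i, Measurable (X i))
    (hlaw : ∀ i, P.map (X i) = ν) (hindep : iIndepFun X P) (θ : κ ↪ ι)
    {g : (κ → S) → ℝ≥0∞} (hg : Measurable g) :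
    ∫⁻ ω, g (fun k ↦ X (θ k) ω) ∂P = ∫⁻ u, g u ∂Measure.pi fun _ ↦ ν := by
  rw [← map_comp_embedding_eq_pi hX hlaw hindep θ,
    lintegral_map hg (measurable_pi_lambda _ fun k ↦ hX (θ k))]

end IID

section Overlap
variable {α β : Type*}

noncomputable def rangeMatch (φ ψ : α ↪ β) (i : {i // φ i ∈ Set.range ψ}) :
    {k // ψ k ∈ Set.range φ} :=
  ⟨(Set.mem_range.mp i.2).choose, i.1, (Set.mem_range.mp i.2).choose_spec.symm⟩

theorem apply_rangeMatch (φ ψ : α ↪ β) (i : {i // φ i ∈ Set.range ψ}) :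
    ψ (rangeMatch φ ψ i) = φ i :=
  (Set.mem_range.mp i.2).choose_spec

noncomputable def rangeMatchEquiv (φ ψ : α ↪ β) :
    {i // φ i ∈ Set.range ψ} ≃ {k // ψ k ∈ Set.range φ} where
  toFun := rangeMatch φ ψ
  invFun := rangeMatch ψ φ
  left_inv i := Subtype.ext <| φ.injective <|
    (apply_rangeMatch ψ φ _).trans (apply_rangeMatch φ ψ i)
  right_inv k := Subtype.ext <| ψ.injective <|
    (apply_rangeMatch φ ψ _).trans (apply_rangeMatch ψ φ k)

variable [Fintype α] [DecidableEq β]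

def embeddingOverlap (φ ψ : α ↪ β) : ℕ := #{i | ψ i ∈ univ.map φ}

theorem embeddingOverlap_le (φ ψ : α ↪ β) : embeddingOverlap φ ψ ≤ Fintype.card α :=
  card_filter_le _ _

theorem embeddingOverlap_eq_card (φ ψ : α ↪ β) [Fintype {i // ψ i ∈ Set.range φ}] :
    embeddingOverlap φ ψ = Fintype.card {i // ψ i ∈ Set.range φ} := by
  rw [embeddingOverlap, ← Fintype.card_subtype]
  exact Fintype.card_congr (Equiv.subtypeEquivRight fun i ↦ by simp)

end Overlap

section Counting
variable {α β : Type*} [Fintype α] [DecidableEq α] [Fintype β] [DecidableEq β]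

def embeddingPreimageEquiv (A : Finset β) (K : Finset α) :
    {ψ : α ↪ β // ∀ i, ψ i ∈ A ↔ i ∈ K} ≃ (K ↪ A) × ({i // i ∉ K} ↪ {b // b ∉ A}) where
  toFun ψ := (ψ.1.subtypeMap fun i hi ↦ (ψ.2 i).2 hi,
    ψ.1.subtypeMap fun i hi hA ↦ hi ((ψ.2 i).1 hA))
  invFun g := by
    refine ⟨⟨fun i ↦ if hi : i ∈ K then g.1 ⟨i, hi⟩ else g.2 ⟨i, hi⟩, fun a b hab ↦ ?_⟩,
      fun i ↦ ?_⟩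
    · beta_reduce at hab
      split_ifs at hab with ha hb hb
      · exact congrArg Subtype.val (g.1.injective (Subtype.ext hab))
      · exact absurd (hab ▸ (g.1 ⟨a, ha⟩).2) (g.2 ⟨b, hb⟩).2
      · exact absurd (hab ▸ (g.1 ⟨b, hb⟩).2) (g.2 ⟨a, ha⟩).2
      · exact congrArg Subtype.val (g.2.injective (Subtype.ext hab))
    · change (if hi : i ∈ K then (g.1 ⟨i, hi⟩ : β) else g.2 ⟨i, hi⟩) ∈ A ↔ i ∈ K
      split_ifs with hi
      · exact iff_of_true (g.1 ⟨i, hi⟩).2 hi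
      · exact iff_of_false (g.2 ⟨i, hi⟩).2 hi
  left_inv ψ := by
    ext i
    simp [Function.Embedding.subtypeMap]
  right_inv g := by
    ext i
    exacts [dif_pos i.2, dif_neg i.2]

theorem card_embedding_preimage_eq (A : Finset β) (K : Finset α) :
    #{ψ : α ↪ β | ∀ i, ψ i ∈ A ↔ i ∈ K}
      = (#A).descFactorial #K * (Fintype.card β - #A).descFactorial (Fintype.card α - #K) := by
  rw [← Fintype.card_subtype, Fintype.card_congr (embeddingPreimageEquiv A K),
    Fintype.card_prod, Fintype.card_embedding_eq, Fintype.card_embedding_eq]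
  simp [Fintype.card_subtype_compl]

theorem card_embedding_card_preimage_eq (A : Finset β) (j : ℕ) :
    #{ψ : α ↪ β | #{i | ψ i ∈ A} = j} = (Fintype.card α).choose j
      * ((#A).descFactorial j * (Fintype.card β - #A).descFactorial (Fintype.card α - j)) := by
  let preimage (ψ : α ↪ β) : Finset α := {i | ψ i ∈ A}
  have hfiber : ∀ K ∈ powersetCard j (univ : Finset α),
      #{ψ ∈ {ψ : α ↪ β | #(preimage ψ) = j} | preimage ψ = K}
        = (#A).descFactorial j * (Fintype.card β - #A).descFactorial (Fintype.card α - j) := by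
    intro K hK
    obtain ⟨-, rfl⟩ := mem_powersetCard.mp hK
    rw [filter_filter, ← card_embedding_preimage_eq]
    congr 1
    refine filter_congr fun ψ _ ↦ ?_
    simp only [preimage, Finset.ext_iff, mem_filter, mem_univ, true_and]
    exact ⟨fun h ↦ h.2, fun h ↦ ⟨by congr 1; ext i; simp [h], h⟩⟩
  rw [card_eq_sum_card_fiberwise (f := preimage) (t := powersetCard j univ)
    fun ψ hψ ↦ mem_powersetCard.mpr ⟨subset_univ _, (mem_filter.mp hψ).2⟩,
    sum_congr rfl hfiber, sum_const, card_powersetCard, card_univ, smul_eq_mul]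

theorem card_embeddingOverlap_eq {j : ℕ} (hj : j ≤ Fintype.card α) :
    #{p : (α ↪ β) × (α ↪ β) | embeddingOverlap p.1 p.2 = j}
      = j.factorial * (Fintype.card α).choose j ^ 2
          * (Fintype.card β).descFactorial (2 * Fintype.card α - j) := by
  rw [card_filter, Fintype.sum_prod_type]
  simp only [← card_filter, embeddingOverlap,
    card_embedding_card_preimage_eq, card_map, card_univ, sum_const, smul_eq_mul,
    Fintype.card_embedding_eq]
  rw [← Nat.descFactorial_mul_descFactorial (show Fintype.card α ≤ 2 * Fintype.card α - j by omega),
    show 2 * Fintype.card α - j - Fintype.card α = Fintype.card α - j by omega,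
    Nat.descFactorial_eq_factorial_mul_choose (Fintype.card α) j]
  ring

end Counting

section TupleIdx
variable {β : Type*} {n j : ℕ}

def overlapJoin (a b : Fin n → β) (j : ℕ) (t : Fin (2 * n - j)) : β :=
  if ht : (t : ℕ) < n then a ⟨t, ht⟩ else b ⟨t - n + j, by omega⟩

theorem overlapJoin_firstTupleIdx (a b : Fin n → β) (hj : j ≤ n) (i : Fin n) :
    overlapJoin a b j (firstTupleIdx hj i) = a i := by
  simp [overlapJoin, firstTupleIdx]

theorem overlapJoin_overlapTupleIdx {a b : Fin n → β} (hab : ∀ i : Fin n, (i : ℕ) < j → b i = a i)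
    (hj : j ≤ n) (i : Fin n) : overlapJoin a b j (overlapTupleIdx hj i) = b i := by
  by_cases hi : (i : ℕ) < j
  · simp [overlapJoin, overlapTupleIdx, hi, hab i hi]
  · have hlt : ¬ n + (i : ℕ) - j < n := by omega
    simp only [overlapJoin, overlapTupleIdx, hi, hlt, dite_false]
    congr
    omega

theorem overlapJoin_injective {a b : Fin n → β} (ha : a.Injective) (hb : b.Injective)
    (hba : ∀ i : Fin n, j ≤ (i : ℕ) → b i ∉ Set.range a) : (overlapJoin a b j).Injective := by
  intro s t hst
  simp only [overlapJoin] at hst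
  split_ifs at hst with hs ht ht
  · exact Fin.ext (Fin.mk.inj_iff.mp (ha hst))
  · exact absurd ⟨_, hst⟩ (hba _ (by simp))
  · exact absurd ⟨_, hst.symm⟩ (hba _ (by simp))
  · have := Fin.mk.inj_iff.mp (hb hst)
    exact Fin.ext (by omega)

variable [DecidableEq β]

theorem exists_perms_align_overlap (φ ψ : Fin n ↪ β) (hφψ : embeddingOverlap φ ψ = j) (hj : j ≤ n) :
    ∃ σ τ : Equiv.Perm (Fin n), (∀ i : Fin n, (i : ℕ) < j → ψ (τ i) = φ (σ i)) ∧
      ∀ i : Fin n, j ≤ (i : ℕ) → ψ (τ i) ∉ Set.range φ := by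
  classical
  have hcard : Fintype.card {i : Fin n // (i : ℕ) < j} = Fintype.card {i // φ i ∈ Set.range ψ} := by
    rw [Fintype.card_fin_lt_of_le hj, Fintype.card_congr (rangeMatchEquiv φ ψ),
      ← embeddingOverlap_eq_card, hφψ]
  set e := Fintype.equivOfCardEq hcard
  refine ⟨e.extendSubtype, (e.trans (rangeMatchEquiv φ ψ)).extendSubtype, fun i hi ↦ ?_,
    fun i hi ↦ Equiv.extendSubtype_not_mem (e.trans (rangeMatchEquiv φ ψ)) i (not_lt.mpr hi)⟩
  rw [Equiv.extendSubtype_apply_of_mem e i hi, Equiv.extendSubtype_apply_of_mem _ i hi]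
  exact apply_rangeMatch φ ψ _

theorem exists_perms_embedding_tupleIdx (φ ψ : Fin n ↪ β) (hφψ : embeddingOverlap φ ψ = j)
    (hj : j ≤ n) : ∃ (σ τ : Equiv.Perm (Fin n)) (θ : Fin (2 * n - j) ↪ β),
      (∀ i, θ (firstTupleIdx hj i) = φ (σ i)) ∧ ∀ i, θ (overlapTupleIdx hj i) = ψ (τ i) := by
  obtain ⟨σ, τ, hmatch, hfresh⟩ := exists_perms_align_overlap φ ψ hφψ hj
  refine ⟨σ, τ, ⟨overlapJoin (φ ∘ σ) (ψ ∘ τ) j, overlapJoin_injective (φ.injective.comp σ.injective)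
    (ψ.injective.comp τ.injective) fun i hi ⟨k, hk⟩ ↦ hfresh i hi ⟨σ k, hk⟩⟩,
    overlapJoin_firstTupleIdx _ _ hj, overlapJoin_overlapTupleIdx hmatch hj⟩

end TupleIdx

noncomputable def overlapIntegral {S : Type*} [MeasurableSpace S] (ν : Measure S) {n : ℕ}
    (h : (Fin n → S) → ℝ≥0∞) {j : ℕ} (hj : j ≤ n) : ℝ≥0∞ :=
  ∫⁻ u : Fin (2 * n - j) → S,
    h (fun i ↦ u (firstTupleIdx hj i)) * h (fun i ↦ u (overlapTupleIdx hj i))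
    ∂Measure.pi fun _ ↦ ν

theorem lintegral_mul_comp_embedding_eq {Ω S ι : Type*} [MeasurableSpace Ω] [MeasurableSpace S]
    [DecidableEq ι] {P : Measure Ω} [IsProbabilityMeasure P] {ν : Measure S} {X : ι → Ω → S}
    (hX : ∀ i, Measurable (X i)) (hlaw : ∀ i, P.map (X i) = ν) (hindep : iIndepFun X P)
    {n j : ℕ} {h : (Fin n → S) → ℝ≥0∞} (hh : Measurable h)
    (hsym : ∀ (σ : Equiv.Perm (Fin n)) (u : Fin n → S), h (u ∘ σ) = h u)
    (φ ψ : Fin n ↪ ι) (hφψ : embeddingOverlap φ ψ = j) (hj : j ≤ n) :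
    ∫⁻ ω, h (fun i ↦ X (φ i) ω) * h (fun i ↦ X (ψ i) ω) ∂P = overlapIntegral ν h hj := by
  obtain ⟨σ, τ, θ, hfirst, hoverlap⟩ := exists_perms_embedding_tupleIdx φ ψ hφψ hj
  rw [overlapIntegral, ← lintegral_comp_embedding_eq hX hlaw hindep θ (by fun_prop)]
  congr 1 with ω
  simp only [hfirst, hoverlap]
  exact congrArg₂ (· * ·) (hsym σ _).symm (hsym τ _).symm

theorem ENNReal.factorial_div_factorial_sub {N k : ℕ} (hk : k ≤ N) :
    (N.factorial : ℝ≥0∞) / ((N - k).factorial : ℝ≥0∞) = N.descFactorial k := by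
  rw [← Nat.factorial_mul_descFactorial hk, Nat.cast_mul, mul_comm,
    ENNReal.mul_div_cancel_right (by exact_mod_cast (Nat.factorial_pos _).ne') (natCast_ne_top _)]

theorem second_moment_sum_distinct_tuples_iid_general {Ω S : Type*} [MeasurableSpace Ω]
    [MeasurableSpace S] (P : Measure Ω) [IsProbabilityMeasure P]
    (μ : Measure S) [SigmaFinite μ]
    (f : S → ℝ≥0∞) (hf : Measurable f) (hf1 : ∫⁻ u, f u ∂μ = 1)
    (N n : ℕ) (h2nN : 2 * n ≤ N)
    (X : Fin N → Ω → S) (hX : ∀ i, Measurable (X i))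
    (hlaw : ∀ i, Measure.map (X i) P = μ.withDensity f)
    (hindep : iIndepFun X P)
    (h : (Fin n → S) → ℝ≥0∞) (hh : Measurable h)
    (hsym : ∀ (σ : Equiv.Perm (Fin n)) (u : Fin n → S), h (u ∘ σ) = h u) :
    ∫⁻ ω, (∑ φ : Fin n ↪ Fin N, h (fun j => X (φ j) ω)) ^ 2 ∂P
      = ∑ j : Fin (n + 1),
          (Nat.factorial j : ℝ≥0∞) * (Nat.choose n j : ℝ≥0∞) ^ 2
            * ((Nat.factorial N : ℝ≥0∞)
                / (Nat.factorial (N - (2 * n - (j : ℕ))) : ℝ≥0∞))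
            * ∫⁻ u : Fin (2 * n - (j : ℕ)) → S,
                h (fun i => u (firstTupleIdx (Nat.lt_succ_iff.mp j.isLt) i))
                  * h (fun i => u (overlapTupleIdx (Nat.lt_succ_iff.mp j.isLt) i))
                  * ∏ i, f (u i)
                ∂(Measure.pi fun _ : Fin (2 * n - (j : ℕ)) => μ) := by
  classical
  have : IsProbabilityMeasure (μ.withDensity f) :=
    ⟨by rw [withDensity_apply _ .univ, Measure.restrict_univ, hf1]⟩
  let overlap (p : (Fin n ↪ Fin N) × (Fin n ↪ Fin N)) : Fin (n + 1) :=
    ⟨embeddingOverlap p.1 p.2, Nat.lt_succ_of_le <| by simpa using embeddingOverlap_le p.1 p.2⟩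
  calc _ = ∑ p : (Fin n ↪ Fin N) × (Fin n ↪ Fin N),
        ∫⁻ ω, h (fun i ↦ X (p.1 i) ω) * h (fun i ↦ X (p.2 i) ω) ∂P :=
        lintegral_sum_sq (F := fun (φ : Fin n ↪ Fin N) ω ↦ h fun i ↦ X (φ i) ω) fun φ ↦
          hh.comp (measurable_pi_lambda _ fun i ↦ hX (φ i))
    _ = ∑ p, overlapIntegral (μ.withDensity f) h (overlap p).is_le := sum_congr rfl fun p _ ↦
        lintegral_mul_comp_embedding_eq hX hlaw hindep hh hsym p.1 p.2 rfl _
    _ = ∑ j, (#{p | overlap p = j} : ℝ≥0∞) * overlapIntegral (μ.withDensity f) h j.is_le := by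
        rw [← Fintype.sum_fiberwise' overlap fun j ↦ overlapIntegral (μ.withDensity f) h j.is_le]
        simp only [Fintype.card_subtype, sum_const, card_univ, nsmul_eq_mul]
    _ = _ := by
        refine sum_congr rfl fun j _ ↦ ?_
        have hcount : #{p | overlap p = j}
            = #{p : (Fin n ↪ Fin N) × (Fin n ↪ Fin N) | embeddingOverlap p.1 p.2 = j} := by
          simp [overlap, Fin.ext_iff]
        rw [hcount, card_embeddingOverlap_eq (by simpa using j.is_le),
          ENNReal.factorial_div_factorial_sub (by omega), overlapIntegral,
          lintegral_pi_withDensity hf (by fun_prop)]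
        simp only [Fintype.card_fin]
        push_cast
        ring

/-- Second moment of a sum over distinct tuples of an i.i.d. sample: with
`X 1,…,X N` i.i.d. with distribution `f·μ`, `n ≥ 1`, `2n ≤ N` and `h : Sⁿ → [0,∞]`
measurable and symmetric,
`E[(∑_φ h(X_{φ 1},…,X_{φ n}))²]
  = ∑_{j=0}^{n} j!·C(n,j)²·(N!/(N−(2n−j))!) ∫ h(u_1,…,u_n) h(u_1,…,u_j,u_{n+1},…,u_{2n−j})
      ∏ f(uᵢ) dμ^{2n−j}`,
the sum over `φ` ranging over injective maps `φ : Fin n ↪ Fin N`. -/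
theorem second_moment_sum_distinct_tuples_iid {Ω S : Type*} [MeasurableSpace Ω]
    [MeasurableSpace S] (P : Measure Ω) [IsProbabilityMeasure P]
    (μ : Measure S) [SigmaFinite μ]
    (f : S → ℝ≥0∞) (hf : Measurable f) (hf1 : ∫⁻ u, f u ∂μ = 1)
    (N n : ℕ) (hn : 1 ≤ n) (h2nN : 2 * n ≤ N)
    (X : Fin N → Ω → S) (hX : ∀ i, Measurable (X i))
    (hlaw : ∀ i, Measure.map (X i) P = μ.withDensity f)
    (hindep : iIndepFun X P)
    (h : (Fin n → S) → ℝ≥0∞) (hh : Measurable h)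
    (hsym : ∀ (σ : Equiv.Perm (Fin n)) (u : Fin n → S), h (u ∘ σ) = h u) :
    ∫⁻ ω, (∑ φ : Fin n ↪ Fin N, h (fun j => X (φ j) ω)) ^ 2 ∂P
      = ∑ j : Fin (n + 1),
          (Nat.factorial j : ℝ≥0∞) * (Nat.choose n j : ℝ≥0∞) ^ 2
            * ((Nat.factorial N : ℝ≥0∞)
                / (Nat.factorial (N - (2 * n - (j : ℕ))) : ℝ≥0∞))
            * ∫⁻ u : Fin (2 * n - (j : ℕ)) → S,
                h (fun i => u (firstTupleIdx (Nat.lt_succ_iff.mp j.isLt) i))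
                  * h (fun i => u (overlapTupleIdx (Nat.lt_succ_iff.mp j.isLt) i))
                  * ∏ i, f (u i)
                ∂(Measure.pi fun _ : Fin (2 * n - (j : ℕ)) => μ) :=
  second_moment_sum_distinct_tuples_iid_general P μ f hf hf1 N n h2nN X hX hlaw hindep h hh hsym
end

section
/- Limiting admissible hard-core ranges under repeated Monte-Carlo cross-validation: let (S, d) be a metric space, let 𝐱 ⊆ S be finite with #𝐱 ≥ 2, and let R̄ := min{ d(x, y) : x, y ∈ 𝐱, x ≠ y }. Let p ∈ (0,1) and let (ε_{i,x})_{i∈ℕ, x∈𝐱} be independent {0,1}-valued random variables with P(ε_{i,x} = 1) = p; set 𝐱_i^V := {x ∈ 𝐱 : ε_{i,x} = 1} and 𝐱_i^T := 𝐱 ∖ 𝐱_i^V. Then almost surely ⋂_{i∈ℕ} { r > 0 : d(v, t) > r for all v ∈ 𝐱_i^V and t ∈ 𝐱_i^T } = { r : 0 < r < R̄ }. -/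
open MeasureTheory ProbabilityTheory Filter Set
open scoped ENNReal

/-! A pair `a, b` of points of `𝐱` at distance `R̄` is split, with `a` in the validation set and `b`
in the training set, with probability `p (1 - p) > 0` in each round, independently across rounds,
so by the second Borel–Cantelli lemma almost surely some round splits it. That round forces every
admissible range below `d(a, b) = R̄`, while ranges in `(0, R̄)` are admissible in every round
because validation and training points are distinct. -/

namespace ProbabilityTheory

variable {Ω ι κ β : Type*} [MeasurableSpace Ω] [MeasurableSpace β] {μ : Measure Ω}
  {X : ι × κ → Ω → β} {T : ι → κ → Set β}

theorem iIndepFun.measure_biInter_biInter_preimage (hX : iIndepFun X μ)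
    (hT : ∀ i j, MeasurableSet (T i j)) (s : Finset ι) (K : Finset κ) :
    μ (⋂ i ∈ s, ⋂ j ∈ K, X (i, j) ⁻¹' T i j) = ∏ i ∈ s, ∏ j ∈ K, μ (X (i, j) ⁻¹' T i j) := by
  have hrect : ⋂ i ∈ s, ⋂ j ∈ K, X (i, j) ⁻¹' T i j = ⋂ q ∈ s ×ˢ K, X q ⁻¹' T q.1 q.2 := by
    ext ω
    simp only [mem_iInter, mem_preimage, Finset.mem_product, Prod.forall, and_imp]
    exact ⟨fun h i j hi hj ↦ h i hi j hj, fun h i hi j hj ↦ h i j hi hj⟩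
  rw [hrect, hX.measure_inter_preimage_eq_mul _ fun q _ ↦ hT q.1 q.2, Finset.prod_product]

theorem iIndepFun.measure_biInter_preimage (hX : iIndepFun X μ)
    (hT : ∀ i j, MeasurableSet (T i j)) (i : ι) (K : Finset κ) :
    μ (⋂ j ∈ K, X (i, j) ⁻¹' T i j) = ∏ j ∈ K, μ (X (i, j) ⁻¹' T i j) := by
  simpa using hX.measure_biInter_biInter_preimage hT {i} K

theorem iIndepFun.iIndepSet_biInter_preimage (hX : iIndepFun X μ) (hmeas : ∀ q, Measurable (X q))
    (hT : ∀ i j, MeasurableSet (T i j)) (K : Finset κ) :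
    iIndepSet (fun i ↦ ⋂ j ∈ K, X (i, j) ⁻¹' T i j) μ := by
  refine (iIndepSet_iff_meas_biInter fun i ↦
    Finset.measurableSet_biInter K fun j _ ↦ hmeas _ (hT i j)).2 fun s ↦ ?_
  rw [hX.measure_biInter_biInter_preimage hT]
  exact Finset.prod_congr rfl fun i _ ↦ (hX.measure_biInter_preimage hT i K).symm

theorem iIndepSet.ae_exists_mem {B : ℕ → Set Ω} (hind : iIndepSet B μ)
    (hB : ∀ n, MeasurableSet (B n)) {c : ℝ≥0∞} (hc : c ≠ 0) (hcB : ∀ n, c ≤ μ (B n)) :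
    ∀ᵐ ω ∂μ, ∃ n, ω ∈ B n := by
  have : IsProbabilityMeasure μ := hind.isProbabilityMeasure
  have hsum : ∑' n, μ (B n) = ∞ :=
    top_unique ((ENNReal.tsum_const_eq_top_of_ne_zero hc).symm.le.trans (ENNReal.tsum_le_tsum hcB))
  have hunion : μ (⋃ n, B n) = 1 :=
    le_antisymm prob_le_one
      ((measure_limsup_eq_one hB hind hsum).symm.le.trans (measure_mono limsup_le_iSup))
  exact ((ae_iff_measure_eq (MeasurableSet.iUnion hB).nullMeasurableSet).2
    (hunion.trans measure_univ.symm)).mono fun _ ↦ mem_iUnion.1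

end ProbabilityTheory

section AdmissibleRanges

variable {S : Type*} [Dist S] {xs : Finset S}

/-- `isVal` marks the validation points; the remaining points of `xs` form the training set. -/
def admissibleRanges (xs : Finset S) (isVal : xs → Bool) : Set ℝ :=
  {r | 0 < r ∧ ∀ v t : xs, isVal v = true → isVal t = false → r < dist (v : S) t}

theorem Ioo_subset_admissibleRanges {R : ℝ}
    (hR : R ∈ lowerBounds {d : ℝ | ∃ x ∈ xs, ∃ y ∈ xs, x ≠ y ∧ d = dist x y}) (isVal : xs → Bool) :
    Ioo 0 R ⊆ admissibleRanges xs isVal := by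
  rintro r ⟨hr0, hrR⟩
  refine ⟨hr0, fun v t hv ht ↦ hrR.trans_le (hR ⟨v, v.2, t, t.2, ?_, rfl⟩)⟩
  intro hvt
  rw [Subtype.ext hvt, ht] at hv
  exact Bool.false_ne_true hv

theorem admissibleRanges_subset_Iio {isVal : xs → Bool} {a b : xs} (ha : isVal a = true)
    (hb : isVal b = false) : admissibleRanges xs isVal ⊆ Iio (dist (a : S) b) :=
  fun _ hr ↦ hr.2 a b ha hb

theorem iInter_admissibleRanges_eq_Ioo {ι : Type*} {isVal : ι → xs → Bool} {R : ℝ}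
    (hR : R ∈ lowerBounds {d : ℝ | ∃ x ∈ xs, ∃ y ∈ xs, x ≠ y ∧ d = dist x y}) {a b : xs}
    (hab : dist (a : S) b = R) {i : ι} (ha : isVal i a = true) (hb : isVal i b = false) :
    ⋂ i, admissibleRanges xs (isVal i) = Ioo 0 R := by
  refine subset_antisymm (fun r hr ↦ ?_) (subset_iInter fun i ↦ Ioo_subset_admissibleRanges hR _)
  have hri := mem_iInter.1 hr i
  exact ⟨hri.1, hab ▸ admissibleRanges_subset_Iio ha hb hri⟩

end AdmissibleRanges

theorem mccv_hardcore_admissible_ranges_general {Ω S : Type*} [MeasurableSpace Ω]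
    [MetricSpace S] (P : Measure Ω) [IsProbabilityMeasure P]
    (xs : Finset S) (Rbar : ℝ)
    (hRbar : IsLeast {d : ℝ | ∃ x ∈ xs, ∃ y ∈ xs, x ≠ y ∧ d = dist x y} Rbar)
    (p : ℝ) (hp : p ∈ Set.Ioo (0 : ℝ) 1)
    (ε : ℕ × xs → Ω → Bool) (hmeas : ∀ q, Measurable (ε q))
    (hindep : iIndepFun ε P)
    (hprob : ∀ q, P {ω | ε q ω = true} = ENNReal.ofReal p) :
    ∀ᵐ ω ∂P,
      (⋂ i : ℕ, {r : ℝ | 0 < r ∧ ∀ v : xs, ∀ t : xs,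
          ε (i, v) ω = true → ε (i, t) ω = false → r < dist (v : S) (t : S)})
        = {r : ℝ | 0 < r ∧ r < Rbar} := by
  classical
  obtain ⟨x, hx, y, hy, hxy, hRxy⟩ := hRbar.1
  set a : xs := ⟨x, hx⟩
  set b : xs := ⟨y, hy⟩
  have hab : a ≠ b := fun h ↦ hxy (congrArg Subtype.val h)
  have hfalse (q) : P (ε q ⁻¹' {false}) = 1 - ENNReal.ofReal p := by
    rw [← Bool.not_true, ← Bool.compl_singleton, preimage_compl,
      prob_compl_eq_one_sub (hmeas q (measurableSet_singleton true))]
    exact congrArg _ (hprob q)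
  -- the event that round `i` puts `a` in the validation set and `b` in the training set
  have hsplit (i : ℕ) : P (⋂ j ∈ ({a, b} : Finset xs), ε (i, j) ⁻¹' {decide (j = a)}) =
      ENNReal.ofReal p * (1 - ENNReal.ofReal p) := by
    rw [hindep.measure_biInter_preimage (T := fun _ j ↦ {decide (j = a)})
      (fun _ _ ↦ measurableSet_singleton _), Finset.prod_pair hab]
    simp only [decide_true, hab.symm, decide_false, hfalse]
    exact congrArg (· * _) (hprob _)
  have hpos : ENNReal.ofReal p * (1 - ENNReal.ofReal p) ≠ 0 :=
    mul_ne_zero (ENNReal.ofReal_pos.2 hp.1).ne'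
      (tsub_pos_of_lt (ENNReal.ofReal_lt_one.2 hp.2)).ne'
  have hind := hindep.iIndepSet_biInter_preimage (T := fun _ j ↦ {decide (j = a)}) hmeas
    (fun _ _ ↦ measurableSet_singleton _) {a, b}
  filter_upwards [hind.ae_exists_mem
    (fun i ↦ Finset.measurableSet_biInter _ fun j _ ↦ hmeas _ (measurableSet_singleton _))
    hpos fun i ↦ (hsplit i).ge] with ω ⟨i, hi⟩
  simp only [mem_iInter, Finset.mem_insert, Finset.mem_singleton, mem_preimage] at hi
  exact iInter_admissibleRanges_eq_Ioo (isVal := fun i v ↦ ε (i, v) ω) (a := a) (b := b) hRbar.2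
    hRxy.symm (by simpa using hi a (.inl rfl)) (by simpa [hab.symm] using hi b (.inr rfl))

/-- Limiting admissible hard-core ranges under repeated Monte-Carlo
cross-validation: with `xs` a finite set of at least two points of a metric space,
`R̄` the minimal distance between distinct points of `xs`, and independent `p`-thinning
marks `ε (i, x)` (validation set `{x : ε (i,x) = true}`, training set its complement),
almost surely
`⋂_i {r > 0 : d(v,t) > r for all v in the i-th validation set and t in the i-th training
set} = (0, R̄)`. -/
theorem mccv_hardcore_admissible_ranges {Ω S : Type*} [MeasurableSpace Ω]
    [MetricSpace S] (P : Measure Ω) [IsProbabilityMeasure P]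
    (xs : Finset S) (hxs : 2 ≤ xs.card) (Rbar : ℝ)
    (hRbar : IsLeast {d : ℝ | ∃ x ∈ xs, ∃ y ∈ xs, x ≠ y ∧ d = dist x y} Rbar)
    (p : ℝ) (hp : p ∈ Set.Ioo (0 : ℝ) 1)
    (ε : ℕ × xs → Ω → Bool) (hmeas : ∀ q, Measurable (ε q))
    (hindep : iIndepFun ε P)
    (hprob : ∀ q, P {ω | ε q ω = true} = ENNReal.ofReal p) :
    ∀ᵐ ω ∂P,
      (⋂ i : ℕ, {r : ℝ | 0 < r ∧ ∀ v : xs, ∀ t : xs,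
          ε (i, v) ω = true → ε (i, t) ω = false → r < dist (v : S) (t : S)})
        = {r : ℝ | 0 < r ∧ r < Rbar} :=
  mccv_hardcore_admissible_ranges_general P xs Rbar hRbar p hp ε hmeas hindep hprob
end
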